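/- arXiv:0711.2965 — 5 statements merged into one kernel-verified Lean document; each statement's English description precedes it below -/
import Mathlib

section
/- In the setting of deformations of a right module: if ρ and ρ̃ are two formal deformations of the right A-module structure ρ₀ on E with respect to the same deformation μ of A, and T^(r) = id + λT₁ + ⋯ + λ^r T_r intertwines ρ and ρ̃ up to order λ^r, then the 1-cochain E_r(a) = Σ_{s=0}^{r} (ρ̃_{r+1−s}(a)∘T_s − T_s∘ρ_{r+1−s}(a)) is δ-closed, and T^(r) + λ^{r+1}T_{r+1} is an intertwiner up to order λ^{r+1} if and only if δT_{r+1} = E_r. -/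
/-!
Write `D(x) = T∘ρ(x) - ρ̃(x)∘T` for the intertwining defect, a formal power series in `λ`
with coefficients in `End(E)`. Using only that `ρ` and `ρ̃` are right actions for `μ`, the
defect satisfies the cocycle identity `ρ̃(b)∘D(a) - D(μ(a, b)) + D(b)∘ρ(a) = 0` in `End(E)⟦λ⟧`.
If `T⁽ʳ⁾` intertwines up to order `λ^r`, then `D` starts in degree `r + 1`, and the degree `r + 1`
part of the identity says that `D_{r+1} = δT_{r+1} - E_r` is a Hochschild 1-cocycle; since `δ² = 0`,
so is `E_r`. Changing `T_{r+1}` does not affect the lower coefficients of `D`, and the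
intertwining condition at order `r + 1` is `D_{r+1} = 0`, that is `δT_{r+1} = E_r`.
-/

open Finset PowerSeries

theorem Finset.Nat.sum_antidiagonal_sum_antidiagonal_fst_eq_snd {M : Type*} [AddCommMonoid M]
    (n : ℕ) (f : ℕ → ℕ → ℕ → M) :
    ∑ p ∈ antidiagonal n, ∑ q ∈ antidiagonal p.1, f q.1 q.2 p.2
      = ∑ p ∈ antidiagonal n, ∑ q ∈ antidiagonal p.2, f p.1 q.1 q.2 := by
  simp only [sum_sigma']
  apply sum_nbij' (fun ⟨⟨_, j⟩, ⟨k, l⟩⟩ ↦ ⟨(k, l + j), (l, j)⟩)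
    (fun ⟨⟨i, _⟩, ⟨k, l⟩⟩ ↦ ⟨(i + k, l), (i, k)⟩) <;> aesop (add simp [add_assoc])

theorem Finset.Nat.sum_antidiagonal_sum_antidiagonal_fst_swap {M : Type*} [AddCommMonoid M]
    (n : ℕ) (f : ℕ → ℕ → ℕ → M) :
    ∑ p ∈ antidiagonal n, ∑ q ∈ antidiagonal p.1, f q.1 q.2 p.2
      = ∑ p ∈ antidiagonal n, ∑ q ∈ antidiagonal p.1, f q.1 p.2 q.2 := by
  simp only [sum_sigma']
  apply sum_nbij' (fun ⟨⟨_, j⟩, ⟨k, l⟩⟩ ↦ ⟨(k + j, l), (k, j)⟩)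
    (fun ⟨⟨_, j⟩, ⟨k, l⟩⟩ ↦ ⟨(k + j, l), (k, j)⟩) <;>
    aesop (add simp [add_assoc, add_comm, add_left_comm])

namespace PowerSeries

variable {R : Type*} [Semiring R]

theorem coeff_mul_of_coeff_eq_zero_of_lt {n : ℕ} (φ ψ : R⟦X⟧) (hψ : ∀ i < n, coeff i ψ = 0) :
    coeff n (φ * ψ) = coeff 0 φ * coeff n ψ := by
  rw [coeff_mul, sum_eq_single_of_mem (0, n) (by simp)]
  rintro ⟨i, j⟩ hij hne
  rw [HasAntidiagonal.mem_antidiagonal] at hij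
  rw [hψ j (by grind), mul_zero]

theorem coeff_mul_of_coeff_eq_zero_of_lt' {n : ℕ} (φ ψ : R⟦X⟧) (hφ : ∀ i < n, coeff i φ = 0) :
    coeff n (φ * ψ) = coeff n φ * coeff 0 ψ := by
  rw [coeff_mul, sum_eq_single_of_mem (n, 0) (by simp)]
  rintro ⟨i, j⟩ hij hne
  rw [HasAntidiagonal.mem_antidiagonal] at hij
  rw [hφ i (by grind), zero_mul]

end PowerSeries

namespace ModuleDeformation

variable {A R : Type*} [Ring R]

def series (F : ℕ → A → R) (x : A) : R⟦X⟧ := mk fun n ↦ F n x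

/-- `evalSeries F m` is `F` evaluated at the formal series `∑ λⁿ mₙ`, e.g. `ρ(μ(a, b))`. -/
def evalSeries (F : ℕ → A → R) (m : ℕ → A) : R⟦X⟧ :=
  mk fun n ↦ ∑ p ∈ antidiagonal n, F p.1 (m p.2)

theorem coeff_evalSeries (F : ℕ → A → R) (m : ℕ → A) (n : ℕ) :
    coeff n (evalSeries F m) = ∑ p ∈ antidiagonal n, F p.1 (m p.2) := coeff_mk _ _

theorem coeff_evalSeries_of_eq_zero_of_lt {n : ℕ} (F : ℕ → A → R) (m : ℕ → A)
    (hF : ∀ i < n, ∀ x, F i x = 0) : coeff n (evalSeries F m) = F n (m 0) := by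
  rw [coeff_evalSeries, sum_eq_single_of_mem (n, 0) (by simp)]
  rintro ⟨i, j⟩ hij hne
  rw [HasAntidiagonal.mem_antidiagonal] at hij
  exact hF i (by grind) _

theorem evalSeries_sub (F G : ℕ → A → R) (m : ℕ → A) :
    evalSeries (F - G) m = evalSeries F m - evalSeries G m := by
  ext n
  simp [coeff_evalSeries, sum_sub_distrib]

theorem mk_mul_evalSeries (T : ℕ → R) (F : ℕ → A → R) (m : ℕ → A) :
    mk T * evalSeries F m = evalSeries (fun n x ↦ coeff n (mk T * series F x)) m := by
  ext n
  simp only [coeff_mul, coeff_evalSeries, coeff_mk, series, mul_sum]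
  exact (Finset.Nat.sum_antidiagonal_sum_antidiagonal_fst_eq_snd n fun i k l ↦ T i * F k (m l)).symm

theorem evalSeries_mul_mk (T : ℕ → R) (F : ℕ → A → R) (m : ℕ → A) :
    evalSeries F m * mk T = evalSeries (fun n x ↦ coeff n (series F x * mk T)) m := by
  ext n
  simp only [coeff_mul, coeff_evalSeries, coeff_mk, series, sum_mul]
  exact Finset.Nat.sum_antidiagonal_sum_antidiagonal_fst_swap n fun k l j ↦ F k (m l) * T j

def IsRightAction (μ : ℕ → A → A → A) (ρ : ℕ → A → R) : Prop :=
  ∀ a b, series ρ b * series ρ a = evalSeries ρ fun n ↦ μ n a b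

theorem isRightAction_iff (μ : ℕ → A → A → A) (ρ : ℕ → A → R) :
    IsRightAction μ ρ ↔ ∀ (n : ℕ) (a b : A),
      ∑ i ∈ range (n + 1), ρ i b * ρ (n - i) a = ∑ i ∈ range (n + 1), ρ i (μ (n - i) a b) := by
  simp only [IsRightAction, PowerSeries.ext_iff, coeff_mul, coeff_evalSeries, series, coeff_mk,
    Finset.Nat.sum_antidiagonal_eq_sum_range_succ_mk]
  exact ⟨fun h n a b ↦ h a b n, fun h a b n ↦ h n a b⟩

noncomputable def defect (T : ℕ → R) (ρ ρt : ℕ → A → R) (x : A) : R⟦X⟧ :=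
  mk T * series ρ x - series ρt x * mk T

theorem coeff_defect (T : ℕ → R) (ρ ρt : ℕ → A → R) (x : A) (n : ℕ) :
    coeff n (defect T ρ ρt x)
      = ∑ i ∈ range (n + 1), T i * ρ (n - i) x - ∑ i ∈ range (n + 1), ρt i x * T (n - i) := by
  simp only [defect, map_sub, coeff_mul, series, coeff_mk,
    Finset.Nat.sum_antidiagonal_eq_sum_range_succ_mk]

theorem coeff_defect_congr {T T' : ℕ → R} {n : ℕ} (h : ∀ i ≤ n, T i = T' i) (ρ ρt : ℕ → A → R)
    (x : A) :
    coeff n (defect T ρ ρt x) = coeff n (defect T' ρ ρt x) := by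
  simp only [coeff_defect]
  congr 1 <;> refine sum_congr rfl fun i hi ↦ ?_ <;> rw [h] <;> grind

def obstruction (T : ℕ → R) (ρ ρt : ℕ → A → R) (r : ℕ) (x : A) : R :=
  ∑ s ∈ range (r + 1), (ρt (r + 1 - s) x * T s - T s * ρ (r + 1 - s) x)

theorem obstruction_congr {T T' : ℕ → R} {r : ℕ} (h : ∀ i ≤ r, T i = T' i) (ρ ρt : ℕ → A → R) :
    obstruction T ρ ρt r = obstruction T' ρ ρt r := by
  ext x
  refine sum_congr rfl fun i hi ↦ ?_
  rw [h i (by grind)]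

theorem coeff_succ_defect (T : ℕ → R) (ρ ρt : ℕ → A → R) (x : A) (n : ℕ) :
    coeff (n + 1) (defect T ρ ρt x)
      = (T (n + 1) * ρ 0 x - ρt 0 x * T (n + 1)) - obstruction T ρ ρt n x := by
  have hreflect : ∑ i ∈ range (n + 1), ρt (i + 1) x * T (n + 1 - (i + 1))
      = ∑ s ∈ range (n + 1), ρt (n + 1 - s) x * T s := by
    rw [← sum_range_reflect]
    refine sum_congr rfl fun i hi ↦ ?_
    rw [mem_range] at hi
    congr 3 <;> omega
  rw [coeff_defect, sum_range_succ _ (n + 1), sum_range_succ' (fun i ↦ ρt i x * T (n + 1 - i)),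
    hreflect, Nat.sub_self, Nat.sub_zero, obstruction, sum_sub_distrib]
  abel

theorem evalSeries_coeff_defect (T : ℕ → R) (ρ ρt : ℕ → A → R) (m : ℕ → A) :
    evalSeries (fun n x ↦ coeff n (defect T ρ ρt x)) m
      = mk T * evalSeries ρ m - evalSeries ρt m * mk T := by
  rw [mk_mul_evalSeries, evalSeries_mul_mk, ← evalSeries_sub]
  rfl

theorem defect_cocycle {μ : ℕ → A → A → A} {ρ ρt : ℕ → A → R} (hρ : IsRightAction μ ρ)
    (hρt : IsRightAction μ ρt) (T : ℕ → R) (a b : A) :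
    series ρt b * defect T ρ ρt a - evalSeries (fun n x ↦ coeff n (defect T ρ ρt x)) (μ · a b)
      + defect T ρ ρt b * series ρ a = 0 := by
  rw [evalSeries_coeff_defect, ← hρ, ← hρt, defect, defect]
  noncomm_ring

theorem forall_coeff_defect_update_eq_zero_iff {T : ℕ → R} {ρ ρt : ℕ → A → R} {r : ℕ}
    (hsame : ρ 0 = ρt 0) (hlow : ∀ n ≤ r, ∀ x, coeff n (defect T ρ ρt x) = 0) (S : R) :
    (∀ n ≤ r + 1, ∀ x, coeff n (defect (Function.update T (r + 1) S) ρ ρt x) = 0)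
      ↔ ∀ x, S * ρ 0 x - ρ 0 x * S = obstruction T ρ ρt r x := by
  have hagree : ∀ i ≤ r, Function.update T (r + 1) S i = T i :=
    fun i hi ↦ Function.update_of_ne (by omega) _ _
  have htop : ∀ x, coeff (r + 1) (defect (Function.update T (r + 1) S) ρ ρt x)
      = (S * ρ 0 x - ρ 0 x * S) - obstruction T ρ ρt r x := by
    intro x
    rw [coeff_succ_defect, obstruction_congr hagree, Function.update_self, hsame]
  constructor
  · intro h x
    rw [← sub_eq_zero, ← htop]
    exact h _ le_rfl x
  · intro h n hn x
    rcases hn.lt_or_eq with hn | rfl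
    · rw [coeff_defect_congr fun i hi ↦ hagree i (by omega)]
      exact hlow n (by omega) x
    · rw [htop, h, sub_self]

section HochschildCochains

variable [Mul A]

def dZero (ρ₀ : A → R) (t : R) (x : A) : R := t * ρ₀ x - ρ₀ x * t

def dOne (ρ₀ : A → R) (e : A → R) (a b : A) : R := e b * ρ₀ a - e (a * b) + ρ₀ b * e a

theorem dOne_sub (ρ₀ e f : A → R) (a b : A) :
    dOne ρ₀ (e - f) a b = dOne ρ₀ e a b - dOne ρ₀ f a b := by
  simp only [dOne, Pi.sub_apply, mul_sub, sub_mul]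
  abel

theorem dOne_dZero {ρ₀ : A → R} (hρ₀ : ∀ a b, ρ₀ (a * b) = ρ₀ b * ρ₀ a) (t : R) (a b : A) :
    dOne ρ₀ (dZero ρ₀ t) a b = 0 := by
  simp only [dOne, dZero, hρ₀]
  noncomm_ring

theorem dOne_coeff_defect {μ : ℕ → A → A → A} {ρ ρt : ℕ → A → R} (hμ₀ : ∀ a b, μ 0 a b = a * b)
    (hρ : IsRightAction μ ρ) (hρt : IsRightAction μ ρt) (hsame : ρ 0 = ρt 0) {T : ℕ → R} {n : ℕ}
    (hlow : ∀ i < n, ∀ x, coeff i (defect T ρ ρt x) = 0) (a b : A) :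
    dOne (ρ 0) (fun x ↦ coeff n (defect T ρ ρt x)) a b = 0 := by
  have h := congrArg (coeff n) (defect_cocycle hρ hρt T a b)
  rw [map_add, map_sub, coeff_mul_of_coeff_eq_zero_of_lt _ _ (hlow · · a),
    coeff_evalSeries_of_eq_zero_of_lt _ _ hlow, coeff_mul_of_coeff_eq_zero_of_lt' _ _ (hlow · · b),
    map_zero, hμ₀, series, series, coeff_mk, coeff_mk, ← hsame] at h
  rw [dOne, ← h]
  abel

end HochschildCochains

end ModuleDeformation

open ModuleDeformation in
theorem module_equivalence_obstruction_general
    {K A E : Type*} [Field K] [Ring A]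
    [AddCommGroup E] [Module K E]
    -- the associative formal deformation μ of A
    (μ : ℕ → A → A → A) (hμ0 : ∀ a b, μ 0 a b = a * b)
    -- two right module structures ρ, ρ̃ for μ deforming the same ρ₀
    (ρ ρt : ℕ → A → Module.End K E)
    (hsame : ρ 0 = ρt 0)
    (hmod : ∀ (n : ℕ) (a b : A),
      ∑ i ∈ range (n + 1), ρ i b * ρ (n - i) a
        = ∑ i ∈ range (n + 1), ρ i (μ (n - i) a b))
    (hmodt : ∀ (n : ℕ) (a b : A),
      ∑ i ∈ range (n + 1), ρt i b * ρt (n - i) a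
        = ∑ i ∈ range (n + 1), ρt i (μ (n - i) a b))
    -- T⁽ʳ⁾ = id + λT₁ + ⋯ + λ^r T_r intertwines ρ and ρ̃ up to order λ^r
    (T : ℕ → Module.End K E) (r : ℕ)
    (hint : ∀ n ≤ r, ∀ a : A,
      ∑ i ∈ range (n + 1), T i * ρ (n - i) a
        = ∑ i ∈ range (n + 1), ρt i a * T (n - i)) :
    letI Er : A → Module.End K E := fun a =>
      ∑ s ∈ range (r + 1), (ρt (r + 1 - s) a * T s - T s * ρ (r + 1 - s) a)
    -- (i) δE_r = 0
    ((∀ a b : A,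
        Er b * ρ 0 a - Er (a * b) + ρ 0 b * Er a = 0) ∧
    -- (ii) T⁽ʳ⁺¹⁾ intertwines up to order λ^{r+1} iff δT_{r+1} = E_r
      (∀ Tnext : Module.End K E,
        (∀ n ≤ r + 1, ∀ a : A,
            ∑ i ∈ range (n + 1),
                Function.update T (r + 1) Tnext i * ρ (n - i) a
              = ∑ i ∈ range (n + 1),
                  ρt i a * Function.update T (r + 1) Tnext (n - i))
          ↔ (∀ a : A, Tnext * ρ 0 a - ρ 0 a * Tnext = Er a))) := by
  have hρ := (isRightAction_iff μ ρ).2 hmod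
  have hρt := (isRightAction_iff μ ρt).2 hmodt
  have hlow : ∀ n ≤ r, ∀ x, coeff n (defect T ρ ρt x) = 0 := fun n hn x ↦ by
    rw [coeff_defect, hint n hn x, sub_self]
  refine ⟨fun a b ↦ ?_, fun S ↦ ?_⟩
  · have hρ₀ : ∀ a b, ρ 0 (a * b) = ρ 0 b * ρ 0 a := fun a b ↦ by
      simpa [hμ0] using (hmod 0 a b).symm
    have hEr : obstruction T ρ ρt r
        = dZero (ρ 0) (T (r + 1)) - fun x ↦ coeff (r + 1) (defect T ρ ρt x) := by
      ext x
      rw [Pi.sub_apply, coeff_succ_defect, ← hsame, dZero, sub_sub_cancel]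
    change dOne (ρ 0) (obstruction T ρ ρt r) a b = 0
    rw [hEr, dOne_sub, dOne_dZero hρ₀, dOne_coeff_defect hμ0 hρ hρt hsame
      fun i hi ↦ hlow i (by omega), sub_zero]
  · simpa only [coeff_defect, sub_eq_zero, obstruction] using
      forall_coeff_defect_update_eq_zero_iff hsame hlow S

/-- (Obstructions for equivalences of deformed right modules.)
If `ρ` and `ρ̃` are two formal deformations of the right `A`-module structure `ρ₀` on `E`
with respect to the same associative deformation `μ` of `A`, and
`T⁽ʳ⁾ = id + λT₁ + ⋯ + λ^r T_r` intertwines `ρ` and `ρ̃` up to order `λ^r`, then the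
1-cochain `E_r(a) = ∑_{s=0}^{r} (ρ̃_{r+1-s}(a)∘T_s - T_s∘ρ_{r+1-s}(a))` is `δ`-closed, and
`T⁽ʳ⁾ + λ^{r+1} T_{r+1}` is an intertwiner up to order `λ^{r+1}` iff `δT_{r+1} = E_r`
(for a 0-cochain `T` one has `δT(a) = T∘ρ₀(a) - ρ₀(a)∘T` with the bimodule structure
`a·D·b = ρ₀(b)∘D∘ρ₀(a)`). -/
theorem module_equivalence_obstruction
    {K A E : Type*} [Field K] [CharZero K] [Ring A] [Algebra K A]
    [AddCommGroup E] [Module K E]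
    -- the associative formal deformation μ of A
    (μ : ℕ → A → A → A) (hμ0 : ∀ a b, μ 0 a b = a * b)
    (hμassoc : ∀ (n : ℕ) (a b c : A),
      ∑ i ∈ range (n + 1), μ i (μ (n - i) a b) c
        = ∑ i ∈ range (n + 1), μ i a (μ (n - i) b c))
    -- two right module structures ρ, ρ̃ for μ deforming the same ρ₀
    (ρ ρt : ℕ → A → Module.End K E)
    (hsame : ρ 0 = ρt 0)
    (hmod : ∀ (n : ℕ) (a b : A),
      ∑ i ∈ range (n + 1), ρ i b * ρ (n - i) a
        = ∑ i ∈ range (n + 1), ρ i (μ (n - i) a b))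
    (hmodt : ∀ (n : ℕ) (a b : A),
      ∑ i ∈ range (n + 1), ρt i b * ρt (n - i) a
        = ∑ i ∈ range (n + 1), ρt i (μ (n - i) a b))
    -- T⁽ʳ⁾ = id + λT₁ + ⋯ + λ^r T_r intertwines ρ and ρ̃ up to order λ^r
    (T : ℕ → Module.End K E) (hT0 : T 0 = 1) (r : ℕ)
    (hint : ∀ n ≤ r, ∀ a : A,
      ∑ i ∈ range (n + 1), T i * ρ (n - i) a
        = ∑ i ∈ range (n + 1), ρt i a * T (n - i)) :
    letI Er : A → Module.End K E := fun a =>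
      ∑ s ∈ range (r + 1), (ρt (r + 1 - s) a * T s - T s * ρ (r + 1 - s) a)
    -- (i) δE_r = 0
    ((∀ a b : A,
        Er b * ρ 0 a - Er (a * b) + ρ 0 b * Er a = 0) ∧
    -- (ii) T⁽ʳ⁺¹⁾ intertwines up to order λ^{r+1} iff δT_{r+1} = E_r
      (∀ Tnext : Module.End K E,
        (∀ n ≤ r + 1, ∀ a : A,
            ∑ i ∈ range (n + 1),
                Function.update T (r + 1) Tnext i * ρ (n - i) a
              = ∑ i ∈ range (n + 1),
                  ρt i a * Function.update T (r + 1) Tnext (n - i))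
          ↔ (∀ a : A, Tnext * ρ 0 a - ρ 0 a * Tnext = Er a))) :=
  module_equivalence_obstruction_general μ hμ0 ρ ρt hsame hmod hmodt T r hint
end

section
/- With V ⊆ ℝⁿ open and convex, define F^k : K_k → X_k by (F^k ω)(v,q₁,…,q_k,w) = (ω(v,w))(q₁−v, …, q_k−v), where K_k = C^∞(V×V, Λ^k(ℝⁿ)*) is the Koszul complex and X_k = C^∞(V×V^k×V) the bar complex. Then F is a chain map: F^k ∘ ∂_K^{k+1} = ∂_X^{k+1} ∘ F^{k+1} for all k ≥ 0, where ∂_K and ∂_X are the Koszul and bar boundaries respectively. -/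
/-! Put `f = ω(v, w)` and `g = (q₁ - v, …, q_k - v)`. After translating every point by `-v`,
the first bar term becomes `f(0, g)` and the middle ones evaluate `f` on tuples with a
repeated entry, so they all vanish. The last term is `f(g, w - v)`, which the cyclic rotation
of the arguments (of sign `(-1)^k`) turns into `(-1)^k f(w - v, g)`; with its coefficient
`(-1)^(k+1)` this is `f(v - w, g) = (F ∘ ∂_K ω)(v, q, w)`. -/

open Finset

namespace FChainMap

variable {n : ℕ}

abbrev E (n : ℕ) := EuclideanSpace ℝ (Fin n)

/-- Elements of the bar module `X_k = C^∞(V × V^k × V)` (as functions of `(v,q,w)`). -/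
def X (n k : ℕ) := E n → (Fin k → E n) → E n → ℂ

/-- Elements of the Koszul module `K_k = C^∞(V×V, Λ^k(ℝⁿ)*)`. -/
def K (n k : ℕ) := E n × E n → (E n) [⋀^Fin k]→ₗ[ℝ] ℂ

/-- The bar boundary `∂_X^{k+1} : X_{k+1} → X_k`. -/
noncomputable def barD (k : ℕ) (χ : X n (k + 1)) : X n k := fun v q w =>
  χ v (Fin.cons v q) w
    + ∑ i : Fin k, (-1 : ℂ) ^ ((i : ℕ) + 1) * χ v (Fin.insertNth i.castSucc (q i) q) w
    + (-1 : ℂ) ^ (k + 1) * χ v (Fin.snoc q w) w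

/-- The Koszul boundary `∂_K^{k+1} : K_{k+1} → K_k`, insertion of `v - w` in the first slot. -/
noncomputable def kosD (k : ℕ) (ω : K n (k + 1)) : K n k := fun p => (ω p).curryLeft (p.1 - p.2)

/-- The chain map `F^k : K_k → X_k`, `(F^k ω)(v,q₁,…,q_k,w) = (ω(v,w))(q₁-v, …, q_k-v)`. -/
noncomputable def F (k : ℕ) (ω : K n k) : X n k := fun v q w => ω (v, w) (fun m => q m - v)

end FChainMap

theorem Fin.comp_insertNth {k : ℕ} {α β : Sort*} (g : α → β) (i : Fin (k + 1)) (x : α)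
    (q : Fin k → α) : g ∘ Fin.insertNth i x q = Fin.insertNth i (g x) (g ∘ q) := by
  funext j
  cases j using Fin.succAboveCases i <;> simp

namespace AlternatingMap

variable {R M N : Type*} [CommSemiring R] [AddCommMonoid M] [Module R M] {k : ℕ}

theorem map_insertNth_castSucc_self [AddCommMonoid N] [Module R N]
    (f : M [⋀^Fin (k + 1)]→ₗ[R] N) (g : Fin k → M) (i : Fin k) :
    f (Fin.insertNth i.castSucc (g i) g) = 0 := by
  refine f.map_eq_zero_of_eq _ (i := i.castSucc) (j := i.succ) ?_ Fin.castSucc_lt_succ.ne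
  rw [Fin.insertNth_apply_same, ← Fin.succAbove_castSucc_self i, Fin.insertNth_apply_succAbove]

theorem map_snoc [AddCommGroup N] [Module R N]
    (f : M [⋀^Fin (k + 1)]→ₗ[R] N) (g : Fin k → M) (x : M) :
    f (Fin.snoc g x) = (-1 : ℤ) ^ k • f (Fin.cons x g) := by
  rw [Fin.snoc_eq_cons_rotate, ← Function.comp_def, f.map_perm, sign_finRotate,
    Nat.add_sub_cancel, Units.smul_def, Units.val_pow_eq_pow_val, Units.val_neg, Units.val_one]

end AlternatingMap

namespace FChainMap

variable {n : ℕ}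

theorem F_kosD_apply (k : ℕ) (ω : K n (k + 1)) (v : E n) (q : Fin k → E n) (w : E n) :
    F k (kosD k ω) v q w = (ω (v, w)).curryLeft (v - w) (fun m => q m - v) :=
  rfl

theorem barD_F_apply (k : ℕ) (ω : K n (k + 1)) (v : E n) (q : Fin k → E n) (w : E n) :
    barD k (F (k + 1) ω) v q w = -(ω (v, w)).curryLeft (w - v) (fun m => q m - v) := by
  set f := ω (v, w)
  have hF (t : Fin (k + 1) → E n) : F (k + 1) ω v t w = f ((· - v) ∘ t) := rfl
  have hfirst : f ((· - v) ∘ Fin.cons v q) = 0 := f.map_coord_zero 0 (sub_self v)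
  have hmiddle (i : Fin k) : f ((· - v) ∘ Fin.insertNth i.castSucc (q i) q) = 0 := by
    rw [Fin.comp_insertNth]
    exact f.map_insertNth_castSucc_self _ i
  have hlast :
      f ((· - v) ∘ Fin.snoc q w) = (-1 : ℤ) ^ k • f (Fin.cons (w - v) ((· - v) ∘ q)) := by
    rw [Fin.comp_snoc, f.map_snoc]
  simp only [barD, hF, hfirst, hmiddle, mul_zero, sum_const_zero, hlast, zsmul_eq_mul]
  push_cast
  rw [zero_add, zero_add, ← mul_assoc, ← pow_add, Odd.neg_one_pow ⟨k, by ring⟩, neg_one_mul]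
  rfl

theorem F_is_chain_map_general
    (V : Set (E n)) :
    ∀ (k : ℕ) (ω : K n (k + 1)) (v : E n) (q : Fin k → E n) (w : E n),
      v ∈ V → (∀ m, q m ∈ V) → w ∈ V →
        F k (kosD k ω) v q w = barD k (F (k + 1) ω) v q w := by
  intro k ω v q w _ _ _
  rw [F_kosD_apply, barD_F_apply, ← neg_sub w v, map_neg, AlternatingMap.neg_apply]

/-- `F` is a chain map from the Koszul complex to the bar complex:
`F^k ∘ ∂_K^{k+1} = ∂_X^{k+1} ∘ F^{k+1}` (pointwise, in particular at all points of `V`,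
`V ⊆ ℝⁿ` open and convex). -/
theorem F_is_chain_map
    (V : Set (E n)) (hV : IsOpen V) (hconv : Convex ℝ V) :
    ∀ (k : ℕ) (ω : K n (k + 1)) (v : E n) (q : Fin k → E n) (w : E n),
      v ∈ V → (∀ m, q m ∈ V) → w ∈ V →
        F k (kosD k ω) v q w = barD k (F (k + 1) ω) v q w :=
  F_is_chain_map_general V

end FChainMap
end

section
/- With V ⊆ ℝⁿ open and convex and F^k : K_k → X_k, G^k : X_k → K_k the chain maps between the Koszul and bar complexes of C^∞(V) defined by (F^k ω)(v,q₁,…,q_k,w) = ω(v,w)(q₁−v,…,q_k−v) and (G^k χ)(v,w) = Σ e^{i₁}∧⋯∧e^{i_k} ∫₀¹∫₀^{t₁}⋯∫₀^{t_{k−1}} ∂^kχ/∂q₁^{i₁}⋯∂q_k^{i_k} (v, t₁v+(1−t₁)w, …, t_k v+(1−t_k)w, w) dt₁⋯dt_k, one has G^k ∘ F^k = id_{K_k} for all k ≥ 0. Consequently Θ^k = F^k ∘ G^k is a projection: Θ^k ∘ Θ^k = Θ^k. -/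
open Finset

namespace GFProjection

variable {n : ℕ}

abbrev E (n : ℕ) := EuclideanSpace ℝ (Fin n)

/-- Elements of the bar module `X_k = C^∞(V × V^k × V)`. -/
def X (n k : ℕ) := E n → (Fin k → E n) → E n → ℂ

/-- Elements of the Koszul module `K_k = C^∞(V×V, Λ^k(ℝⁿ)*)`. -/
def K (n k : ℕ) := E n × E n → (E n) [⋀^Fin k]→ₗ[ℝ] ℂ

/-- The chain map `F^k : K_k → X_k`, `(F^k ω)(v,q₁,…,q_k,w) = (ω(v,w))(q₁-v, …, q_k-v)`. -/
noncomputable def F (k : ℕ) (ω : K n k) : X n k := fun v q w => ω (v, w) (fun m => q m - v)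

noncomputable def qderiv (k : ℕ) (m : Fin k) (i : Fin n) (χ : X n k) : X n k :=
  fun v q w =>
    fderiv ℝ (fun y => χ v (Function.update q m y) w) (q m) (EuclideanSpace.single i 1)

/-- The mixed partial derivative `∂^k χ / ∂q₁^{i₁} ⋯ ∂q_k^{i_k}`. -/
noncomputable def mixed (k : ℕ) (I : Fin k → Fin n) (χ : X n k) : X n k :=
  (List.finRange k).foldr (fun m acc => qderiv k m (I m) acc) χ

/-- Iterated integral `∫₀^b ∫₀^{t₁} ⋯ ∫₀^{t_{k-1}} f(t₁,…,t_k) dt_k ⋯ dt₁`. -/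
noncomputable def iterInt : (k : ℕ) → ((Fin k → ℝ) → ℂ) → ℝ → ℂ
  | 0, f, _ => f (fun i => i.elim0)
  | (k + 1), f, b => ∫ t in (0:ℝ)..b, iterInt k (fun s => f (Fin.cons t s)) t

/-- The chain map `G^k : X_k → K_k`, the resulting `k`-form being recorded through its
evaluation on `k`-tuples `x` of vectors. -/
noncomputable def G (k : ℕ) (χ : X n k) : E n × E n → (Fin k → E n) → ℂ := fun p x =>
  ∑ I : Fin k → Fin n,
    (Matrix.det (Matrix.of fun l m : Fin k => x m (I l)) : ℂ) *
      iterInt k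
        (fun t => mixed k I χ p.1 (fun m => t m • p.1 + (1 - t m) • p.2) p.2) 1

/-- The projection `Θ^k = F^k ∘ G^k : X_k → X_k`. -/
noncomputable def Θ (k : ℕ) (χ : X n k) : X n k := fun v q w =>
  G k χ (v, w) (fun m => q m - v)

/-- Smoothness of `χ ∈ X_k` on `V × V^k × V`. -/
def SmoothOn (V : Set (E n)) {k : ℕ} (χ : X n k) : Prop :=
  ContDiffOn ℝ (⊤ : ℕ∞) (fun z : E n × (Fin k → E n) × E n => χ z.1 z.2.1 z.2.2)
    (V ×ˢ (Set.pi Set.univ fun _ : Fin k => V) ×ˢ V)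

/-! ### Auxiliary lemmas -/

lemma detC {k : ℕ} (f : Fin k → Fin k → ℝ) :
    (Matrix.of fun l m => ((f l m : ℝ) : ℂ)).det = (((Matrix.of f).det : ℝ) : ℂ) := by
  rw [show (((Matrix.of f).det : ℝ) : ℂ) = Complex.ofRealHom (Matrix.of f).det from rfl,
    RingHom.map_det]
  rfl

lemma altSum_apply {α : Type*} (s : Finset α) {k : ℕ}
    (f : α → (E n) [⋀^Fin k]→ₗ[ℝ] ℂ) (x : Fin k → E n) :
    (∑ i ∈ s, f i) x = ∑ i ∈ s, f i x :=
  map_sum (AddMonoidHom.mk' (fun g : (E n) [⋀^Fin k]→ₗ[ℝ] ℂ => g x)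
    (fun a b => AlternatingMap.add_apply a b x)) f s

/-- Iterated mixed partials of `F k ω`, computed along an arbitrary duplicate-free list. -/
lemma foldr_qderiv_F (k : ℕ) (ω : K n k) (I : Fin k → Fin n) :
    ∀ L : List (Fin k), L.Nodup → ∀ (v : E n) (q : Fin k → E n) (w : E n),
      (L.foldr (fun m acc => qderiv k m (I m) acc) (F k ω)) v q w
        = ω (v, w) (fun m => if m ∈ L then EuclideanSpace.single (I m) 1 else q m - v) := by
  intro L
  induction L with
  | nil => intro _ v q w; simp [F]
  | cons a L ih =>
    intro hnd v q w
    have haL : a ∉ L := (List.nodup_cons.mp hnd).1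
    have hnd' : L.Nodup := (List.nodup_cons.mp hnd).2
    have hfold : ((a :: L).foldr (fun m acc => qderiv k m (I m) acc) (F k ω))
        = qderiv k a (I a) (L.foldr (fun m acc => qderiv k m (I m) acc) (F k ω)) := rfl
    rw [hfold]
    set z : Fin k → E n := fun m => if m ∈ L then EuclideanSpace.single (I m) 1 else q m - v
      with hz
    have hfun : (fun y => (L.foldr (fun m acc => qderiv k m (I m) acc) (F k ω))
          v (Function.update q a y) w)
        = fun y => ω (v, w) (Function.update z a (y - v)) := by
      funext y
      rw [ih hnd' v (Function.update q a y) w]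
      congr 1
      funext m
      by_cases hm : m = a
      · subst hm
        simp [haL, hz]
      · simp [Function.update_of_ne hm, hz]
    have hq : Function.update q a (q a) = q := Function.update_eq_self a q
    show fderiv ℝ (fun y => (L.foldr (fun m acc => qderiv k m (I m) acc) (F k ω))
          v (Function.update q a y) w) (q a) (EuclideanSpace.single (I a) 1) = _
    rw [hfun]
    have key : HasFDerivAt (fun y : E n => ω (v, w) (Function.update z a (y - v)))
        (LinearMap.toContinuousLinearMap
          ((ω (v, w)).toMultilinearMap.toLinearMap z a)) (q a) := by
      have h1 : (fun y : E n => ω (v, w) (Function.update z a (y - v)))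
          = fun y => LinearMap.toContinuousLinearMap
                ((ω (v, w)).toMultilinearMap.toLinearMap z a) y
              - LinearMap.toContinuousLinearMap
                ((ω (v, w)).toMultilinearMap.toLinearMap z a) v := by
        funext y
        rw [← map_sub]
        simp [MultilinearMap.toLinearMap]
      rw [h1]
      exact ((LinearMap.toContinuousLinearMap _).hasFDerivAt).sub_const _
    rw [key.fderiv]
    have h2 : LinearMap.toContinuousLinearMap
          ((ω (v, w)).toMultilinearMap.toLinearMap z a) (EuclideanSpace.single (I a) 1)
        = ω (v, w) (Function.update z a (EuclideanSpace.single (I a) 1)) := by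
      simp [MultilinearMap.toLinearMap]
    rw [h2]
    congr 1
    funext m
    by_cases hm : m = a
    · subst hm; simp
    · simp [Function.update_of_ne hm, hz, hm]

lemma mixed_F (k : ℕ) (ω : K n k) (I : Fin k → Fin n) (v : E n) (q : Fin k → E n) (w : E n) :
    mixed k I (F k ω) v q w = ω (v, w) (fun m => EuclideanSpace.single (I m) 1) := by
  rw [mixed, foldr_qderiv_F k ω I _ (List.nodup_finRange k)]
  congr 1
  funext m
  simp [List.mem_finRange]

lemma iterInt_const : ∀ (k : ℕ) (c : ℂ) (b : ℝ),
    iterInt k (fun _ => c) b = ((b ^ k / k.factorial : ℝ) : ℂ) * c := by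
  intro k
  induction k with
  | zero => intro c b; simp [iterInt]
  | succ k ih =>
    intro c b
    have hstep : iterInt (k + 1) (fun _ => c) b
        = ∫ t in (0:ℝ)..b, iterInt k (fun _ => c) t := rfl
    rw [hstep]
    have h1 : ∀ t : ℝ, iterInt k (fun _ => c) t = (t ^ k / k.factorial : ℝ) • c := by
      intro t; rw [ih, Complex.real_smul]
    simp only [h1]
    rw [intervalIntegral.integral_smul_const, Complex.real_smul]
    congr 1
    rw [intervalIntegral.integral_div, integral_pow]
    have hf : ((k + 1).factorial : ℝ) = (k + 1) * k.factorial := by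
      rw [Nat.factorial_succ]; push_cast; ring
    rw [hf]
    have h2 : ((k:ℝ) + 1) ≠ 0 := by positivity
    have h3 : (k.factorial : ℝ) ≠ 0 := Nat.cast_ne_zero.mpr k.factorial_ne_zero
    push_cast
    field_simp
    simp

lemma basis_expand (k : ℕ) (A : (E n) [⋀^Fin k]→ₗ[ℝ] ℂ) (x : Fin k → E n) :
    A x = ∑ J : Fin k → Fin n,
      ((∏ m, x m (J m) : ℝ) : ℂ) * A (fun m => EuclideanSpace.single (J m) 1) := by
  have hx : ∀ m, x m = ∑ i, x m i • EuclideanSpace.single i 1 := by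
    intro m
    have h := (EuclideanSpace.basisFun (Fin n) ℝ).sum_repr (x m)
    simp only [EuclideanSpace.basisFun_repr, EuclideanSpace.basisFun_apply] at h
    exact h.symm
  conv_lhs => rw [show x = (fun m => ∑ i, x m i • EuclideanSpace.single i 1) from funext hx]
  rw [show (A fun m => ∑ i, x m i • EuclideanSpace.single i 1)
      = A.toMultilinearMap (fun m => ∑ i, x m i • EuclideanSpace.single i 1) from rfl,
    MultilinearMap.map_sum]
  refine Finset.sum_congr rfl fun J _ => ?_
  have h1 := A.toMultilinearMap.map_smul_univ (fun m => x m (J m))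
    (fun m => EuclideanSpace.single (J m) 1)
  rw [h1, Complex.real_smul]
  rfl

lemma sum_det_smul (k : ℕ) (A : (E n) [⋀^Fin k]→ₗ[ℝ] ℂ) (x : Fin k → E n) :
    ∑ I : Fin k → Fin n,
        ((Matrix.det (Matrix.of fun l m : Fin k => x m (I l)) : ℝ) : ℂ) *
          A (fun m => EuclideanSpace.single (I m) 1)
      = (k.factorial : ℂ) * A x := by
  classical
  have hdet : ∀ I : Fin k → Fin n,
      ((Matrix.det (Matrix.of fun l m : Fin k => x m (I l)) : ℝ) : ℂ)
        = ∑ σ : Equiv.Perm (Fin k),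
            ((Equiv.Perm.sign σ : ℤ) : ℂ) * ((∏ i, x i (I (σ i)) : ℝ) : ℂ) := by
    intro I
    rw [Matrix.det_apply]
    push_cast [Units.smul_def, zsmul_eq_mul]
    rfl
  have step1 : ∀ I : Fin k → Fin n,
      ((Matrix.det (Matrix.of fun l m : Fin k => x m (I l)) : ℝ) : ℂ) *
          A (fun m => EuclideanSpace.single (I m) 1)
        = ∑ σ : Equiv.Perm (Fin k),
            ((Equiv.Perm.sign σ : ℤ) : ℂ) * ((∏ i, x i (I (σ i)) : ℝ) : ℂ) *
              A (fun m => EuclideanSpace.single (I m) 1) := by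
    intro I; rw [hdet I, Finset.sum_mul]
  rw [Finset.sum_congr rfl fun I _ => step1 I, Finset.sum_comm]
  have step2 : ∀ σ : Equiv.Perm (Fin k),
      (∑ I : Fin k → Fin n,
          ((Equiv.Perm.sign σ : ℤ) : ℂ) * ((∏ i, x i (I (σ i)) : ℝ) : ℂ) *
            A (fun m => EuclideanSpace.single (I m) 1))
        = ∑ J : Fin k → Fin n,
            ((∏ i, x i (J i) : ℝ) : ℂ) * A (fun m => EuclideanSpace.single (J m) 1) := by
    intro σ
    have hsq : ((Equiv.Perm.sign σ : ℤ) : ℂ) * ((Equiv.Perm.sign σ : ℤ) : ℂ) = 1 := by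
      rw [← Int.cast_mul, ← Units.val_mul, Int.units_mul_self]
      norm_num
    let e : (Fin k → Fin n) ≃ (Fin k → Fin n) :=
      Equiv.arrowCongr σ (Equiv.refl (Fin n))
    rw [← Equiv.sum_comp e (fun I =>
      ((Equiv.Perm.sign σ : ℤ) : ℂ) * ((∏ i, x i (I (σ i)) : ℝ) : ℂ) *
        A (fun m => EuclideanSpace.single (I m) 1))]
    refine Finset.sum_congr rfl fun J _ => ?_
    have he : ∀ m, e J m = J (σ.symm m) := fun m => rfl
    have hprod : (∏ i, x i (e J (σ i))) = ∏ i, x i (J i) := by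
      refine Finset.prod_congr rfl fun i _ => ?_
      rw [he, Equiv.symm_apply_apply]
    have hperm : A (fun m => EuclideanSpace.single (e J m) 1)
        = ((Equiv.Perm.sign σ : ℤ) : ℂ) * A (fun m => EuclideanSpace.single (J m) 1) := by
      have h1 : (fun m => EuclideanSpace.single (e J m) (1:ℝ))
          = (fun m => EuclideanSpace.single (J m) (1:ℝ)) ∘ σ.symm := by
        funext m; rw [he]; rfl
      rw [h1, A.map_perm, Equiv.Perm.sign_symm, Units.smul_def, zsmul_eq_mul]
    rw [hprod, hperm, ← mul_assoc, mul_comm (((Equiv.Perm.sign σ : ℤ) : ℂ)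
      * ((∏ i, x i (J i) : ℝ) : ℂ)) (((Equiv.Perm.sign σ : ℤ) : ℂ))]
    rw [← mul_assoc, hsq, one_mul]
  rw [Finset.sum_congr rfl fun σ _ => step2 σ, Finset.sum_const, Finset.card_univ,
    Fintype.card_perm, nsmul_eq_mul, Fintype.card_fin]
  rw [basis_expand k A x]

/-- The key identity `G^k (F^k ω) = ω`, valid pointwise with no smoothness needed. -/
lemma G_F_eq (k : ℕ) (ω : K n k) (p : E n × E n) (x : Fin k → E n) :
    G k (F k ω) p x = ω p x := by
  have hmix : ∀ (I : Fin k → Fin n),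
      (fun t : Fin k → ℝ =>
          mixed k I (F k ω) p.1 (fun m => t m • p.1 + (1 - t m) • p.2) p.2)
        = fun _ => ω p (fun m => EuclideanSpace.single (I m) 1) := by
    intro I
    funext t
    rw [mixed_F]
  have hG : G k (F k ω) p x
      = ∑ I : Fin k → Fin n,
          ((Matrix.det (Matrix.of fun l m : Fin k => x m (I l)) : ℝ) : ℂ) *
            ((((1:ℝ) ^ k / k.factorial : ℝ) : ℂ) *
              ω p (fun m => EuclideanSpace.single (I m) 1)) := by
    rw [G]
    refine Finset.sum_congr rfl fun I _ => ?_
    rw [hmix I, iterInt_const, detC]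
  rw [hG]
  have : ∑ I : Fin k → Fin n,
      ((Matrix.det (Matrix.of fun l m : Fin k => x m (I l)) : ℝ) : ℂ) *
        ((((1:ℝ) ^ k / k.factorial : ℝ) : ℂ) *
          ω p (fun m => EuclideanSpace.single (I m) 1))
      = (((1:ℝ) ^ k / k.factorial : ℝ) : ℂ) *
        ∑ I : Fin k → Fin n,
          ((Matrix.det (Matrix.of fun l m : Fin k => x m (I l)) : ℝ) : ℂ) *
            ω p (fun m => EuclideanSpace.single (I m) 1) := by
    rw [Finset.mul_sum]
    exact Finset.sum_congr rfl fun I _ => by ring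
  rw [this, sum_det_smul k (ω p) x, ← mul_assoc]
  have hfac : (((1:ℝ) ^ k / k.factorial : ℝ) : ℂ) * (k.factorial : ℂ) = 1 := by
    have h3 : (k.factorial : ℂ) ≠ 0 := by
      exact_mod_cast Nat.cast_ne_zero.mpr k.factorial_ne_zero
    push_cast
    field_simp
    simp
  rw [hfac, one_mul]

/-- The alternating-map avatar of `G k χ p`. -/
noncomputable def omega' (k : ℕ) (χ : X n k) : K n k := fun p =>
  ∑ I : Fin k → Fin n,
    iterInt k (fun t => mixed k I χ p.1 (fun m => t m • p.1 + (1 - t m) • p.2) p.2) 1 •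
      (Complex.ofRealAm.toLinearMap.compAlternatingMap
        ((Matrix.detRowAlternating : (Fin k → ℝ) [⋀^Fin k]→ₗ[ℝ] ℝ).compLinearMap
          (LinearMap.pi fun l => ((EuclideanSpace.proj (I l) : E n →L[ℝ] ℝ) : E n →ₗ[ℝ] ℝ))))

lemma omega'_apply (k : ℕ) (χ : X n k) (p : E n × E n) (x : Fin k → E n) :
    omega' k χ p x = G k χ p x := by
  rw [omega', G, altSum_apply]
  refine Finset.sum_congr rfl fun I _ => ?_
  rw [AlternatingMap.smul_apply]
  have h1 : (Complex.ofRealAm.toLinearMap.compAlternatingMap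
        ((Matrix.detRowAlternating : (Fin k → ℝ) [⋀^Fin k]→ₗ[ℝ] ℝ).compLinearMap
          (LinearMap.pi fun l => ((EuclideanSpace.proj (I l) : E n →L[ℝ] ℝ) : E n →ₗ[ℝ] ℝ)))) x
      = ((Matrix.det (Matrix.of fun l m : Fin k => x m (I l)) : ℝ) : ℂ) := by
    rw [LinearMap.compAlternatingMap_apply, AlternatingMap.compLinearMap_apply]
    have h2 : (Matrix.detRowAlternating : (Fin k → ℝ) [⋀^Fin k]→ₗ[ℝ] ℝ)
          (fun m => (LinearMap.pi fun l =>
            ((EuclideanSpace.proj (I l) : E n →L[ℝ] ℝ) : E n →ₗ[ℝ] ℝ)) (x m))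
        = Matrix.det (Matrix.of fun l m : Fin k => x m (I l)) := by
      have h3 : (Matrix.detRowAlternating : (Fin k → ℝ) [⋀^Fin k]→ₗ[ℝ] ℝ)
            (fun m => (LinearMap.pi fun l =>
              ((EuclideanSpace.proj (I l) : E n →L[ℝ] ℝ) : E n →ₗ[ℝ] ℝ)) (x m))
          = Matrix.det (Matrix.of fun m l : Fin k => x m (I l)) := rfl
      rw [h3, ← Matrix.det_transpose]
      rfl
    rw [h2]
    rfl
  rw [h1, detC, smul_eq_mul]
  ring

lemma Theta_eq_F_omega' (k : ℕ) (χ : X n k) : Θ k χ = F k (omega' k χ) := by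
  funext v q w
  rw [Θ, F, ← omega'_apply]

/-- For `V ⊆ ℝⁿ` open and convex one has `G^k ∘ F^k = id_{K_k}` for all
`k ≥ 0`; consequently `Θ^k = F^k ∘ G^k` is a projection, `Θ^k ∘ Θ^k = Θ^k`. -/
theorem G_comp_F_eq_id_and_projection
    (V : Set (E n)) (hV : IsOpen V) (hconv : Convex ℝ V) :
    (∀ (k : ℕ) (ω : K n k),
      (∀ x : Fin k → E n, ContDiffOn ℝ (⊤ : ℕ∞) (fun p : E n × E n => ω p x) (V ×ˢ V)) →
      ∀ p : E n × E n, p.1 ∈ V → p.2 ∈ V → ∀ x : Fin k → E n,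
        G k (F k ω) p x = ω p x) ∧
    (∀ (k : ℕ) (χ : X n k), SmoothOn V χ →
      ∀ (v : E n) (q : Fin k → E n) (w : E n),
        v ∈ V → (∀ m, q m ∈ V) → w ∈ V →
          Θ k (Θ k χ) v q w = Θ k χ v q w) := by
  constructor
  · intro k ω _ p _ _ x
    exact G_F_eq k ω p x
  · intro k χ _ v q w _ _ _
    have h1 : Θ k (Θ k χ) v q w = G k (F k (omega' k χ)) (v, w) (fun m => q m - v) := by
      rw [Θ, Theta_eq_F_omega']
    rw [h1, G_F_eq, omega'_apply]
    rfl

end GFProjection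
end

section
/- Let V ⊆ ℝⁿ be open convex, G a manifold, A = C^∞(V), A^e = C^∞(V×V), and consider the Koszul cochain complex Hom_{A^e}(K_•, Diffop(V×G)) with differential (δ_K^k ψ)(e^{i₁}∧⋯∧e^{i_{k+1}}) = ψ(Σ_j ξ^j ι(e_j)(e^{i₁}∧⋯∧e^{i_{k+1}})), where ξ^j(v,w) = v^j − w^j. Define (δ_K^* ψ)(e^{i₁}∧⋯∧e^{i_{k−1}}) = −Σ_j ψ(e^j∧e^{i₁}∧⋯∧e^{i_{k−1}}) ∘ ∂/∂x^j. Then δ_K^{k−1}∘(δ_K^*)^k + (δ_K^*)^{k+1}∘δ_K^k = deg + k·id on Hom_{A^e}(K_k, Diffop(V×G)), where deg acts on the values of ψ by the V-derivative-counting degree operator. -/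
open Finset

namespace KoszulCochain

variable {𝒜 : Type*} [Ring 𝒜] [Algebra ℂ 𝒜] {n : ℕ}

/-- The Koszul cochain differential `δ_K` on `Hom_{A^e}(K_•, Diffop(V×G))`:
`(δ_K ψ)(e^{i₁}∧⋯∧e^{i_{k+1}}) = ψ(∑_j ξ^j ι(e_j)(e^{i₁}∧⋯∧e^{i_{k+1}}))`,
where `ξ^j(v,w) = v^j - w^j` acts on a value `D` through the bimodule structure as
`ξ^j·D = X j * D - D * X j` (`X j` = multiplication by `x^j`).  Cochains are recorded by
their values `ψ(e^{i₁}∧⋯∧e^{i_k})` on basis wedges. -/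
def dK (X : Fin n → 𝒜) (k : ℕ) (ψ : (Fin k → Fin n) → 𝒜) :
    (Fin (k + 1) → Fin n) → 𝒜 := fun I =>
  ∑ m : Fin (k + 1), (-1 : ℤ) ^ (m : ℕ) •
    (X (I m) * ψ (I ∘ m.succAbove) - ψ (I ∘ m.succAbove) * X (I m))

/-- The map `δ_K^*`: `(δ_K^* ψ)(e^{i₁}∧⋯∧e^{i_k}) = -∑_j ψ(e^j∧e^{i₁}∧⋯∧e^{i_k}) ∘ ∂/∂x^j`
(`P j` = the operator `∂/∂x^j`, and `∘` is composition, i.e. multiplication in `𝒜`). -/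
def dKstar (P : Fin n → 𝒜) (k : ℕ) (ψ : (Fin (k + 1) → Fin n) → 𝒜) :
    (Fin k → Fin n) → 𝒜 := fun I =>
  - ∑ j : Fin n, ψ (Fin.cons j I) * P j

/-- Cochains with values in `Λ` are alternating in their indices. -/
def Alternating (k : ℕ) (ψ : (Fin k → Fin n) → 𝒜) : Prop :=
  ∀ (I : Fin k → Fin n) (σ : Equiv.Perm (Fin k)),
    ψ (I ∘ σ) = (Equiv.Perm.sign σ : ℤ) • ψ I

/-- On `Hom_{A^e}(K_k, Diffop(V×G))` one has
`δ_K^{k-1}∘(δ_K^*)^k + (δ_K^*)^{k+1}∘δ_K^k = deg + k·id`, where `deg` acts on the values by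
the `V`-derivative-counting degree operator, `deg D = ∑_j ((D·x^j) - (x^j·D))∘∂/∂x^j`
(identity of Lemma 4.7 of the paper; here stated for cochains of degree `k+1 ≥ 1`).
`X j` and `P j` satisfy the canonical commutation relations `[P i, X j] = δ_{ij}`. -/
theorem koszul_deg_identity
    (X P : Fin n → 𝒜)
    (hXP : ∀ i j, P i * X j - X j * P i = if i = j then 1 else 0)
    (k : ℕ) (ψ : (Fin (k + 1) → Fin n) → 𝒜) (hψ : Alternating (k + 1) ψ) :
    ∀ I : Fin (k + 1) → Fin n,
      dK X k (dKstar P k ψ) I + dKstar P (k + 1) (dK X (k + 1) ψ) I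
        = (∑ j, (ψ I * X j - X j * ψ I) * P j) + (k + 1) • ψ I := by
  intro I
  set A : Fin (k + 1) → Fin n → 𝒜 := fun m j => ψ (Fin.cons j (I ∘ m.succAbove)) with hA
  have key : ∀ m : Fin (k + 1), ((-1 : ℤ) ^ (m : ℕ)) • A m (I m) = ψ I := by
    intro m
    have h1 : Fin.cons (I m) (I ∘ m.succAbove)
        = I ∘ ⇑((Fin.cycleRange m)⁻¹ : Equiv.Perm (Fin (k + 1))) := by
      funext i
      induction i using Fin.cases with
      | zero =>
          show I m = I ((Fin.cycleRange m).symm 0)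
          rw [Fin.cycleRange_symm_zero]
      | succ i =>
          show (I ∘ m.succAbove) i = I ((Fin.cycleRange m).symm i.succ)
          rw [Fin.cycleRange_symm_succ]
          rfl
    have hsign : ((Equiv.Perm.sign ((Fin.cycleRange m)⁻¹ : Equiv.Perm (Fin (k + 1)))) : ℤ)
        = (-1 : ℤ) ^ (m : ℕ) := by
      simp [Fin.sign_cycleRange]
    simp only [hA]
    show ((-1 : ℤ) ^ (m : ℕ)) • ψ (Fin.cons (I m) (I ∘ m.succAbove)) = ψ I
    rw [h1, hψ I _, hsign, smul_smul, ← mul_pow]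
    norm_num
  have hcomp : ∀ (j : Fin n) (m : Fin (k + 1)),
      (Fin.cons j I : Fin (k + 2) → Fin n) ∘ (m.succ).succAbove
        = Fin.cons j (I ∘ m.succAbove) := by
    intro j m
    funext i
    induction i using Fin.cases with
    | zero => simp [Fin.succ_succAbove_zero]
    | succ i => simp [Fin.succ_succAbove_succ]
  have hzero : ∀ j : Fin n,
      (Fin.cons j I : Fin (k + 2) → Fin n) ∘ (0 : Fin (k + 2)).succAbove = I := by
    intro j
    funext i
    simp [Fin.succAbove_zero]
  have e1 : ∀ (x S : 𝒜), x * (-S) - (-S) * x = S * x - x * S := by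
    intros; noncomm_ring
  -- expand the first summand
  have hterm1 : dK X k (dKstar P k ψ) I
      = ∑ m : Fin (k + 1), ∑ j : Fin n,
          ((-1 : ℤ) ^ (m : ℕ)) • (A m j * P j * X (I m) - X (I m) * (A m j * P j)) := by
    rw [dK]
    apply Finset.sum_congr rfl; intro m _
    rw [dKstar, e1, Finset.sum_mul, Finset.mul_sum, ← Finset.sum_sub_distrib,
      Finset.smul_sum]
  -- expand `dK X (k+1) ψ` on `Fin.cons j I`
  have hg : ∀ j : Fin n, dK X (k + 1) ψ (Fin.cons j I)
      = (X j * ψ I - ψ I * X j)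
        + ∑ m : Fin (k + 1),
            (-((-1 : ℤ) ^ (m : ℕ))) • (X (I m) * A m j - A m j * X (I m)) := by
    intro j
    rw [dK, Fin.sum_univ_succ]
    congr 1
    · rw [hzero]
      simp
    · apply Finset.sum_congr rfl; intro m _
      rw [hcomp]
      simp only [hA, Fin.cons_succ, Fin.val_succ, pow_succ, mul_neg_one]
  -- expand the second summand
  have hterm2 : dKstar P (k + 1) (dK X (k + 1) ψ) I
      = (∑ j, (ψ I * X j - X j * ψ I) * P j)
        + ∑ m : Fin (k + 1), ∑ j : Fin n,
            ((-1 : ℤ) ^ (m : ℕ)) • ((X (I m) * A m j - A m j * X (I m)) * P j) := by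
    rw [dKstar]
    have step : ∀ j : Fin n, dK X (k + 1) ψ (Fin.cons j I) * P j
        = (X j * ψ I - ψ I * X j) * P j
          + ∑ m : Fin (k + 1),
              (-((-1 : ℤ) ^ (m : ℕ))) • ((X (I m) * A m j - A m j * X (I m)) * P j) := by
      intro j
      rw [hg j, add_mul, Finset.sum_mul]
      congr 1
      apply Finset.sum_congr rfl; intro m _
      rw [smul_mul_assoc]
    rw [Finset.sum_congr rfl fun j _ => step j, Finset.sum_add_distrib, neg_add]
    congr 1
    · rw [← Finset.sum_neg_distrib]
      apply Finset.sum_congr rfl; intro j _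
      noncomm_ring
    · rw [← Finset.sum_neg_distrib, Finset.sum_comm]
      apply Finset.sum_congr rfl; intro m _
      rw [← Finset.sum_neg_distrib]
      apply Finset.sum_congr rfl; intro j _
      rw [neg_smul, neg_neg]
  rw [hterm1, hterm2, ← add_assoc, add_comm (∑ m, _) _, add_assoc, ← Finset.sum_add_distrib]
  congr 1
  have hm : ∀ m : Fin (k + 1),
      ((∑ j : Fin n, ((-1 : ℤ) ^ (m : ℕ)) • (A m j * P j * X (I m) - X (I m) * (A m j * P j)))
        + ∑ j : Fin n, ((-1 : ℤ) ^ (m : ℕ)) • ((X (I m) * A m j - A m j * X (I m)) * P j))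
      = ψ I := by
    intro m
    rw [← Finset.sum_add_distrib]
    have hj : ∀ j : Fin n,
        ((-1 : ℤ) ^ (m : ℕ)) • (A m j * P j * X (I m) - X (I m) * (A m j * P j))
          + ((-1 : ℤ) ^ (m : ℕ)) • ((X (I m) * A m j - A m j * X (I m)) * P j)
        = ((-1 : ℤ) ^ (m : ℕ)) • (A m j * (if j = I m then (1 : 𝒜) else 0)) := by
      intro j
      rw [← smul_add, ← hXP]
      congr 1
      noncomm_ring
    rw [Finset.sum_congr rfl fun j _ => hj j, ← Finset.smul_sum]
    have hs : (∑ j : Fin n, A m j * (if j = I m then (1 : 𝒜) else 0)) = A m (I m) := by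
      rw [Finset.sum_eq_single (I m)]
      · simp
      · intro b _ hb; simp [hb]
      · intro h; exact absurd (Finset.mem_univ _) h
    rw [hs, key]
  rw [Finset.sum_congr rfl fun m _ => hm m]
  simp


end KoszulCochain
end

section
/- Let V ⊆ ℝⁿ be open convex and G a manifold. For k ≥ 1 define (δ_K^{−1})^k on Hom_{A^e}(K_k, Diffop(V×G)) by (δ_K^{−1})^k ψ = (1/(k+r)) (δ_K^*)^k ψ on the component where ψ has values of V-degree r (and 0 when k = r = 0). Then δ_K^{k−1}∘(δ_K^{−1})^k + (δ_K^{−1})^{k+1}∘δ_K^k = id for all k ≥ 1; hence the cohomology of the complex Hom_{A^e}(K_•, Diffop(V×G)) vanishes in all degrees k ≥ 1. -/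
/-! On values, `dKinv` is `δ_K^*` composed with `h_c = ∑_r (c + r)⁻¹ π_r` (`degAddInv`), the
inverse of `deg + c` for `c = k + 1 > 0`. Commutators with the coordinates lower the `V`-degree
by one, `deg [x^j, D] = [x^j, deg D] - [x^j, D]`, so `δ_K ∘ h_c = h_{c+1} ∘ δ_K`. The homotopy
identity therefore reduces to `δ_K δ_K^* + δ_K^* δ_K = deg + c` applied to the cochain `h_c ∘ ψ`. -/

open Finset

namespace KoszulHomotopyDeg

variable {𝒜 : Type*} [Ring 𝒜] [Algebra ℂ 𝒜] {n : ℕ}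

/-- The Koszul cochain differential `δ_K` (values on basis wedges; the `A^e`-action of
`ξ^j = x^j⊗1 - 1⊗x^j` on a value `D` is `X j * D - D * X j`). -/
def dK (X : Fin n → 𝒜) (k : ℕ) (ψ : (Fin k → Fin n) → 𝒜) :
    (Fin (k + 1) → Fin n) → 𝒜 := fun I =>
  ∑ m : Fin (k + 1), (-1 : ℤ) ^ (m : ℕ) •
    (X (I m) * ψ (I ∘ m.succAbove) - ψ (I ∘ m.succAbove) * X (I m))

/-- `(δ_K^* ψ)(α) = -∑_j ψ(e^j ∧ α) ∘ ∂/∂x^j`. -/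
def dKstar (P : Fin n → 𝒜) (k : ℕ) (ψ : (Fin (k + 1) → Fin n) → 𝒜) :
    (Fin k → Fin n) → 𝒜 := fun I =>
  - ∑ j : Fin n, ψ (Fin.cons j I) * P j

/-- The degree operator `deg D = ∑_j ((D·x^j) - (x^j·D))∘∂/∂x^j` counting the number of
derivatives in the `V`-directions. -/
def degOp (X P : Fin n → 𝒜) (D : 𝒜) : 𝒜 :=
  ∑ j, (D * X j - X j * D) * P j

/-- The homotopy `(δ_K^{-1})^{k+1} ψ = ∑_r (k+1+r)⁻¹ (δ_K^*)(π_r ∘ ψ)`, where `π_r` projects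
the values onto their homogeneous component of `V`-degree `r`. -/
noncomputable def dKinv (P : Fin n → 𝒜) (π : ℕ → 𝒜 →ₗ[ℂ] 𝒜) (k : ℕ)
    (ψ : (Fin (k + 1) → Fin n) → 𝒜) : (Fin k → Fin n) → 𝒜 := fun I =>
  ∑ᶠ r : ℕ, (((k + 1 + r : ℕ) : ℂ))⁻¹ • dKstar P k (fun J => π r (ψ J)) I

def Alternating (k : ℕ) (ψ : (Fin k → Fin n) → 𝒜) : Prop :=
  ∀ (I : Fin k → Fin n) (σ : Equiv.Perm (Fin k)),
    ψ (I ∘ σ) = (Equiv.Perm.sign σ : ℤ) • ψ I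

open Function

theorem commutator_commutator_mul {R : Type*} [Ring R] (x y p d : R) :
    ((x * d - d * x) * y - y * (x * d - d * x)) * p
      = x * ((d * y - y * d) * p) - ((d * y - y * d) * p) * x
        + (d * y - y * d) * (p * x - x * p) - (d * (x * y - y * x) - (x * y - y * x) * d) * p := by
  noncomm_ring

theorem mul_commutator_add_commutator_mul {R : Type*} [Ring R] (a p x : R) :
    ((a * p) * x - x * (a * p)) + (x * a - a * x) * p = a * (p * x - x * p) := by
  noncomm_ring

section RingLevel

omit [Algebra ℂ 𝒜]

theorem degOp_commutator {X P : Fin n → 𝒜}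
    (hXP : ∀ i j, P i * X j - X j * P i = if i = j then 1 else 0)
    (hXX : ∀ i j, X i * X j = X j * X i) (j : Fin n) (D : 𝒜) :
    degOp X P (X j * D - D * X j)
      = X j * degOp X P D - degOp X P D * X j - (X j * D - D * X j) := by
  have hcomm : ∀ i, X j * X i - X i * X j = 0 := fun i => by rw [hXX, sub_self]
  simp only [degOp, commutator_commutator_mul, hcomm, hXP, mul_zero, sub_zero, zero_mul,
    mul_ite, mul_one, Finset.sum_add_distrib, Finset.sum_sub_distrib, Finset.sum_ite_eq',
    Finset.mem_univ, if_true, ← Finset.mul_sum, ← Finset.sum_mul]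
  abel

theorem Alternating.map {F : Type*} [FunLike F 𝒜 𝒜] [AddMonoidHomClass F 𝒜 𝒜] (f : F)
    {k : ℕ} {ψ : (Fin k → Fin n) → 𝒜} (hψ : Alternating k ψ) :
    Alternating k (fun J => f (ψ J)) := fun I σ => by
  simp only [hψ I σ, map_zsmul]

theorem Alternating.dKstar (P : Fin n → 𝒜) {k : ℕ} {ψ : (Fin (k + 1) → Fin n) → 𝒜}
    (hψ : Alternating (k + 1) ψ) : Alternating k (dKstar P k ψ) := by
  intro I σ
  have hcons : ∀ j : Fin n, (Fin.cons j (I ∘ σ) : Fin (k + 1) → Fin n)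
      = Fin.cons j I ∘ Equiv.Perm.decomposeFin.symm (0, σ) := by
    intro j; funext x
    refine Fin.cases ?_ (fun i => ?_) x <;> simp
  have hsign : ((Equiv.Perm.sign (Equiv.Perm.decomposeFin.symm (0, σ)) : ℤˣ) : ℤ)
      = Equiv.Perm.sign σ := by
    rw [Equiv.Perm.decomposeFin.symm_sign, if_pos rfl, one_mul]
  simp only [KoszulHomotopyDeg.dKstar, hcons, hψ _ (Equiv.Perm.decomposeFin.symm (0, σ)),
    hsign, smul_mul_assoc, ← Finset.smul_sum, smul_neg]

theorem Alternating.apply_cons_succAbove {k : ℕ} {ψ : (Fin (k + 1) → Fin n) → 𝒜}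
    (hψ : Alternating (k + 1) ψ) (I : Fin (k + 1) → Fin n) (m : Fin (k + 1)) :
    ψ (Fin.cons (I m) (I ∘ m.succAbove)) = (-1 : ℤ) ^ (m : ℕ) • ψ I := by
  have hcycle : (Fin.cons (I m) (I ∘ m.succAbove) : Fin (k + 1) → Fin n) = I ∘ ⇑m.cycleRange⁻¹ :=
    Fin.cons_removeNth_eq_comp_cycleRange_symm I m
  rw [hcycle, hψ I m.cycleRange⁻¹, map_inv, Fin.sign_cycleRange]
  simp

theorem dK_dKstar_apply (X P : Fin n → 𝒜) (k : ℕ) (φ : (Fin (k + 1) → Fin n) → 𝒜)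
    (I : Fin (k + 1) → Fin n) :
    dK X k (dKstar P k φ) I = ∑ m : Fin (k + 1), ∑ j, (-1 : ℤ) ^ (m : ℕ) •
      ((φ (Fin.cons j (I ∘ m.succAbove)) * P j) * X (I m)
        - X (I m) * (φ (Fin.cons j (I ∘ m.succAbove)) * P j)) := by
  simp only [dK, dKstar, mul_neg, neg_mul, sub_neg_eq_add, neg_add_eq_sub, Finset.sum_mul,
    Finset.mul_sum, ← Finset.sum_sub_distrib, Finset.smul_sum]

theorem dK_cons (X : Fin n → 𝒜) (k : ℕ) (φ : (Fin (k + 1) → Fin n) → 𝒜) (j : Fin n)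
    (I : Fin (k + 1) → Fin n) :
    dK X (k + 1) φ (Fin.cons j I) = (X j * φ I - φ I * X j)
      - ∑ m : Fin (k + 1), (-1 : ℤ) ^ (m : ℕ) •
        (X (I m) * φ (Fin.cons j (I ∘ m.succAbove))
          - φ (Fin.cons j (I ∘ m.succAbove)) * X (I m)) := by
  have hsucc : ∀ m : Fin (k + 1), (Fin.cons j I : Fin (k + 2) → Fin n) ∘ m.succ.succAbove
      = Fin.cons j (I ∘ m.succAbove) := by
    intro m; funext i
    refine Fin.cases ?_ (fun i => ?_) i <;> simp [Fin.succ_succAbove_succ]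
  rw [dK, Fin.sum_univ_succ]
  simp only [hsucc, Fin.succAbove_zero, Fin.cons_comp_succ, Fin.cons_zero, Fin.cons_succ,
    Fin.val_zero, pow_zero, one_smul, Fin.val_succ, pow_succ, mul_neg_one, neg_smul,
    Finset.sum_neg_distrib, ← sub_eq_add_neg]

theorem dKstar_dK_apply (X P : Fin n → 𝒜) (k : ℕ) (φ : (Fin (k + 1) → Fin n) → 𝒜)
    (I : Fin (k + 1) → Fin n) :
    dKstar P (k + 1) (dK X (k + 1) φ) I = degOp X P (φ I) + ∑ m : Fin (k + 1), ∑ j,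
      (-1 : ℤ) ^ (m : ℕ) • ((X (I m) * φ (Fin.cons j (I ∘ m.succAbove))
        - φ (Fin.cons j (I ∘ m.succAbove)) * X (I m)) * P j) := by
  rw [Finset.sum_comm]
  simp only [dKstar, dK_cons, degOp, sub_mul, Finset.sum_mul, smul_mul_assoc,
    Finset.sum_sub_distrib, neg_sub]
  abel

theorem dK_dKstar_add_dKstar_dK {X P : Fin n → 𝒜}
    (hXP : ∀ i j, P i * X j - X j * P i = if i = j then 1 else 0) {k : ℕ}
    {φ : (Fin (k + 1) → Fin n) → 𝒜} (hφ : Alternating (k + 1) φ) (I : Fin (k + 1) → Fin n) :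
    dK X k (dKstar P k φ) I + dKstar P (k + 1) (dK X (k + 1) φ) I
      = degOp X P (φ I) + (k + 1) • φ I := by
  have hm : ∀ m : Fin (k + 1), ∑ j, ((-1 : ℤ) ^ (m : ℕ) •
      ((φ (Fin.cons j (I ∘ m.succAbove)) * P j) * X (I m)
        - X (I m) * (φ (Fin.cons j (I ∘ m.succAbove)) * P j))
      + (-1 : ℤ) ^ (m : ℕ) • ((X (I m) * φ (Fin.cons j (I ∘ m.succAbove))
        - φ (Fin.cons j (I ∘ m.succAbove)) * X (I m)) * P j)) = φ I := by
    intro m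
    -- `[P j, X (I m)]` kills every `j ≠ I m`; moving `I m` back to slot `m` costs `(-1) ^ m`.
    simp only [← smul_add, mul_commutator_add_commutator_mul, hXP, mul_ite, mul_one, mul_zero,
      ← Finset.smul_sum, Finset.sum_ite_eq', Finset.mem_univ, if_true,
      hφ.apply_cons_succAbove, smul_smul, ← pow_add, Even.neg_one_pow ⟨(m : ℕ), rfl⟩, one_smul]
  rw [dK_dKstar_apply, dKstar_dK_apply, add_left_comm, ← Finset.sum_add_distrib]
  simp only [← Finset.sum_add_distrib, hm, Finset.sum_const, Finset.card_univ, Fintype.card_fin]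

end RingLevel

section Spectral

variable {M : Type*} [AddCommGroup M] [Module ℂ M] (π : ℕ → M →ₗ[ℂ] M)
  (hπ_fin : ∀ a : M, ∃ N, ∀ r > N, π r a = 0)

include hπ_fin in
theorem hasFiniteSupport_proj (a : M) : HasFiniteSupport fun r => π r a := by
  obtain ⟨N, hN⟩ := hπ_fin a
  refine (Set.finite_Iic N).subset fun r hr => ?_
  by_contra h
  exact hr (hN r (not_le.mp h))

include hπ_fin in
theorem hasFiniteSupport_smul_proj {R : Type*} [SMulZeroClass R M] (f : ℕ → R) (a : M) :
    HasFiniteSupport fun r => f r • π r a :=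
  (hasFiniteSupport_proj π hπ_fin a).smul_right f

/-- `(D + c)⁻¹`, for `D` diagonalised by the projections `π r` with eigenvalues `r`. -/
noncomputable def degAddInv (c : ℕ) : M →ₗ[ℂ] M where
  toFun a := ∑ᶠ r, ((c + r : ℕ) : ℂ)⁻¹ • π r a
  map_add' a b := by
    simp only [map_add, smul_add]
    exact finsum_add_distrib (hasFiniteSupport_smul_proj π hπ_fin _ a)
      (hasFiniteSupport_smul_proj π hπ_fin _ b)
  map_smul' z a := by
    simp only [map_smul, smul_comm _ z, RingHom.id_apply, smul_finsum]

theorem degAddInv_apply (c : ℕ) (a : M) :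
    degAddInv π hπ_fin c a = ∑ᶠ r, ((c + r : ℕ) : ℂ)⁻¹ • π r a := rfl

variable {π} (D : M →ₗ[ℂ] M) (hπ_sum : ∀ a : M, ∑ᶠ r, π r a = a)
  (hπ_deg : ∀ r (a : M), D (π r a) = r • π r a)

include hπ_fin hπ_sum hπ_deg in
theorem proj_apply_map_eq_nsmul
    (hπ_orth : ∀ r s (a : M), π r (π s a) = if r = s then π s a else 0)
    (s : ℕ) (b : M) : π s (D b) = s • π s b := by
  conv_lhs => rw [← hπ_sum b, map_finsum D (hasFiniteSupport_proj π hπ_fin b)]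
  simp_rw [hπ_deg]
  rw [map_finsum (π s) (hasFiniteSupport_smul_proj π hπ_fin (fun r => r) b)]
  simp_rw [map_nsmul, hπ_orth]
  rw [finsum_eq_single _ s fun r hr => by simp [Ne.symm hr]]
  simp

theorem inv_smul_nsmul_add_nsmul {c : ℕ} (hc : 0 < c) (r : ℕ) (x : M) :
    ((c + r : ℕ) : ℂ)⁻¹ • (r • x + c • x) = x := by
  rw [← add_nsmul, ← Nat.cast_smul_eq_nsmul ℂ, smul_smul, add_comm r,
    inv_mul_cancel₀ (Nat.cast_ne_zero.mpr (by omega)), one_smul]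

include hπ_fin hπ_sum hπ_deg in
theorem degAddInv_right_inverse {c : ℕ} (hc : 0 < c) (a : M) :
    D (degAddInv π hπ_fin c a) + c • degAddInv π hπ_fin c a = a := by
  have hfin : HasFiniteSupport fun r => ((c + r : ℕ) : ℂ)⁻¹ • π r a :=
    hasFiniteSupport_smul_proj π hπ_fin _ a
  rw [degAddInv_apply, map_finsum D hfin, smul_finsum' _ hfin,
    ← finsum_add_distrib (hfin.fun_comp (map_zero D)) (hfin.fun_comp (smul_zero c))]
  conv_rhs => rw [← hπ_sum a]
  refine finsum_congr fun r => ?_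
  simp only [map_smul, hπ_deg, smul_comm c, ← smul_add]
  exact inv_smul_nsmul_add_nsmul hc r _

include hπ_fin hπ_sum hπ_deg in
theorem degAddInv_left_inverse
    (hπ_orth : ∀ r s (a : M), π r (π s a) = if r = s then π s a else 0)
    {c : ℕ} (hc : 0 < c) (b : M) :
    degAddInv π hπ_fin c (D b + c • b) = b := by
  rw [degAddInv_apply]
  conv_rhs => rw [← hπ_sum b]
  refine finsum_congr fun r => ?_
  rw [map_add, map_nsmul, proj_apply_map_eq_nsmul hπ_fin D hπ_sum hπ_deg hπ_orth]
  exact inv_smul_nsmul_add_nsmul hc r _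

end Spectral

noncomputable def degOpₗ (X P : Fin n → 𝒜) : 𝒜 →ₗ[ℂ] 𝒜 where
  toFun := degOp X P
  map_add' a b := by
    simp only [degOp, ← Finset.sum_add_distrib]
    exact Finset.sum_congr rfl fun j _ => by noncomm_ring
  map_smul' z a := by
    simp only [degOp, RingHom.id_apply, Finset.smul_sum, smul_mul_assoc, mul_smul_comm,
      ← smul_sub]

section Homotopy

variable {X P : Fin n → 𝒜} (hXP : ∀ i j, P i * X j - X j * P i = if i = j then 1 else 0)
  (hXX : ∀ i j, X i * X j = X j * X i) {π : ℕ → 𝒜 →ₗ[ℂ] 𝒜}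
  (hπ_fin : ∀ a : 𝒜, ∃ N, ∀ r > N, π r a = 0) (hπ_sum : ∀ a : 𝒜, ∑ᶠ r, π r a = a)
  (hπ_orth : ∀ r s (a : 𝒜), π r (π s a) = if r = s then π s a else 0)
  (hπ_deg : ∀ r (a : 𝒜), degOp X P (π r a) = r • π r a)

include hXP hXX hπ_sum hπ_orth hπ_deg

theorem degAddInv_commutator {c : ℕ} (hc : 0 < c) (j : Fin n) (a : 𝒜) :
    degAddInv π hπ_fin (c + 1) (X j * a - a * X j)
      = X j * degAddInv π hπ_fin c a - degAddInv π hπ_fin c a * X j := by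
  set b := degAddInv π hπ_fin c a
  have hb : degOp X P b + c • b = a :=
    degAddInv_right_inverse hπ_fin (degOpₗ X P) hπ_sum hπ_deg hc a
  have key : degOp X P (X j * b - b * X j) + (c + 1) • (X j * b - b * X j)
      = X j * a - a * X j := by
    rw [degOp_commutator hXP hXX, ← hb]
    simp only [mul_add, add_mul, mul_smul_comm, smul_mul_assoc, succ_nsmul, smul_sub]
    abel
  rw [← key]
  exact degAddInv_left_inverse hπ_fin (degOpₗ X P) hπ_sum hπ_deg hπ_orth c.succ_pos _

theorem dK_degAddInv {c : ℕ} (hc : 0 < c) (k : ℕ) (ψ : (Fin k → Fin n) → 𝒜) :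
    dK X k (fun J => degAddInv π hπ_fin c (ψ J))
      = fun I => degAddInv π hπ_fin (c + 1) (dK X k ψ I) := by
  funext I
  simp only [dK, map_sum, map_zsmul,
    degAddInv_commutator hXP hXX hπ_fin hπ_sum hπ_orth hπ_deg hc]

end Homotopy

theorem dKinv_eq_dKstar (P : Fin n → 𝒜) {π : ℕ → 𝒜 →ₗ[ℂ] 𝒜}
    (hπ_fin : ∀ a : 𝒜, ∃ N, ∀ r > N, π r a = 0) (k : ℕ) (ψ : (Fin (k + 1) → Fin n) → 𝒜) :
    dKinv P π k ψ = dKstar P k (fun J => degAddInv π hπ_fin (k + 1) (ψ J)) := by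
  funext I
  simp only [dKinv, dKstar, degAddInv_apply]
  rw [Finset.sum_congr rfl fun j _ => finsum_mul' _ _ (hasFiniteSupport_smul_proj π hπ_fin _ _),
    sum_finsum_comm _ _ fun j _ => (hasFiniteSupport_smul_proj π hπ_fin _ _).fun_comp
      (g := (· * P j)) (zero_mul _), ← finsum_neg_distrib]
  simp only [Finset.smul_sum, smul_neg, smul_mul_assoc]

theorem koszul_cohomology_vanishes_general
    (X P : Fin n → 𝒜)
    (hXP : ∀ i j, P i * X j - X j * P i = if i = j then 1 else 0)
    (hXX : ∀ i j, X i * X j = X j * X i)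
    (π : ℕ → 𝒜 →ₗ[ℂ] 𝒜)
    (hπ_fin : ∀ a : 𝒜, ∃ N, ∀ r > N, π r a = 0)
    (hπ_sum : ∀ a : 𝒜, ∑ᶠ r, π r a = a)
    (hπ_orth : ∀ r s (a : 𝒜), π r (π s a) = if r = s then π s a else 0)
    (hπ_deg : ∀ r (a : 𝒜), degOp X P (π r a) = r • π r a)
    (k : ℕ) (ψ : (Fin (k + 1) → Fin n) → 𝒜) (hψ : Alternating (k + 1) ψ) :
    -- the homotopy identity (on cochains of degree k+1 ≥ 1)
    (∀ I : Fin (k + 1) → Fin n,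
      dK X k (dKinv P π k ψ) I + dKinv P π (k + 1) (dK X (k + 1) ψ) I = ψ I) ∧
    -- hence closed cochains in degree k+1 ≥ 1 are exact
    ((∀ I, dK X (k + 1) ψ I = 0) →
      ∃ φ : (Fin k → Fin n) → 𝒜, Alternating k φ ∧ ∀ I, dK X k φ I = ψ I) := by
  have homotopy : ∀ I : Fin (k + 1) → Fin n,
      dK X k (dKinv P π k ψ) I + dKinv P π (k + 1) (dK X (k + 1) ψ) I = ψ I := by
    intro I
    rw [dKinv_eq_dKstar P hπ_fin, dKinv_eq_dKstar P hπ_fin,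
      ← dK_degAddInv hXP hXX hπ_fin hπ_sum hπ_orth hπ_deg k.succ_pos,
      dK_dKstar_add_dKstar_dK hXP (hψ.map _)]
    exact degAddInv_right_inverse hπ_fin (degOpₗ X P) hπ_sum hπ_deg k.succ_pos (ψ I)
  refine ⟨homotopy, fun hclosed => ⟨dKinv P π k ψ, ?_, fun I => ?_⟩⟩
  · rw [dKinv_eq_dKstar P hπ_fin]
    exact (hψ.map _).dKstar P
  · have hzero : dKinv P π (k + 1) (dK X (k + 1) ψ) I = 0 := by
      simp [funext hclosed, dKinv, dKstar]
    simpa [hzero] using homotopy I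

/-- With `(δ_K^{-1})^k = (k+r)⁻¹ (δ_K^*)^k` on the component of values of
`V`-degree `r`, one has `δ_K^{k-1}∘(δ_K^{-1})^k + (δ_K^{-1})^{k+1}∘δ_K^k = id` for all
`k ≥ 1`; hence the cohomology of `Hom_{A^e}(K_•, Diffop(V×G))` vanishes in degrees `k ≥ 1`.
The degree decomposition of `Diffop(V×G)` is encoded by the projections `π_r` onto the
homogeneous components (`π_r` idempotent, mutually orthogonal, summing to the identity, with
`deg = ∑_r r·π_r` in the sense that `degOp (π_r a) = r • π_r a`). -/
theorem koszul_cohomology_vanishes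
    (X P : Fin n → 𝒜)
    (hXP : ∀ i j, P i * X j - X j * P i = if i = j then 1 else 0)
    (hPP : ∀ i j, P i * P j = P j * P i)
    (hXX : ∀ i j, X i * X j = X j * X i)
    (π : ℕ → 𝒜 →ₗ[ℂ] 𝒜)
    (hπ_fin : ∀ a : 𝒜, ∃ N, ∀ r > N, π r a = 0)
    (hπ_sum : ∀ a : 𝒜, ∑ᶠ r, π r a = a)
    (hπ_orth : ∀ r s (a : 𝒜), π r (π s a) = if r = s then π s a else 0)
    (hπ_deg : ∀ r (a : 𝒜), degOp X P (π r a) = r • π r a)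
    (k : ℕ) (ψ : (Fin (k + 1) → Fin n) → 𝒜) (hψ : Alternating (k + 1) ψ) :
    -- the homotopy identity (on cochains of degree k+1 ≥ 1)
    (∀ I : Fin (k + 1) → Fin n,
      dK X k (dKinv P π k ψ) I + dKinv P π (k + 1) (dK X (k + 1) ψ) I = ψ I) ∧
    -- hence closed cochains in degree k+1 ≥ 1 are exact
    ((∀ I, dK X (k + 1) ψ I = 0) →
      ∃ φ : (Fin k → Fin n) → 𝒜, Alternating k φ ∧ ∀ I, dK X k φ I = ψ I) :=
  koszul_cohomology_vanishes_general X P hXP hXX π hπ_fin hπ_sum hπ_orth hπ_deg k ψ hψ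

end KoszulHomotopyDeg
end
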